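/- Let Q̄ be an imprecise probability tree and E_V the associated game-theoretic upper expectation. For every situation s ∈ 𝒳* and every non-increasing sequence (f_n)_{n∈ℕ₀} of finitary, bounded-above global variables (each f_n is an extended-real-valued global variable that is m-measurable for some m ∈ ℕ₀ and bounded above) that converges pointwise to a global variable f ∈ V̄, one has E_V(f | s) = lim_{n→∞} E_V(f_n | s). -/

import Mathlib

/-!
Monotonicity of `EV` gives `EV f ≤ ⨅ n, EV fₙ`. Conversely, let `M` be a bounded-below
supermartingale whose liminf dominates `f` on `Γ(s)`, and fix `ε > 0`. Capping `M` at an upper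
bound of `f₀` keeps it a supermartingale (continuity under upper cuts), so we may assume `M` is
real and bounded. Along each path `ω`, the limit `f ω = lim fₙ ω` is at most `liminf M(ωᵏ)`, so
some finitary `fₙ` is below `M(ωᵏ) + ε` on the whole cylinder `Γ(ωᵏ)`. By compactness of `Γ(s)`
(König's lemma) one index `J` and one horizon serve all paths. Stopping `M + ε` at the first such
situation gives a supermartingale whose liminf dominates `f_J` on `Γ(s)` and whose value at `s`
is at most `M(s) + ε`, so `EV f_J ≤ M(s) + ε`.
-/

open Filter MeasureTheory
open scoped Classical ENNReal NNReal

namespace UEP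

variable {X : Type*}

/-- The string of the first `n` states of a path `ω`. -/
def pref (ω : ℕ → X) (n : ℕ) : List X := List.ofFn (fun i : Fin n => ω i)

/-- The cylinder event of a situation `s`. -/
def cyl (s : List X) : Set (ℕ → X) := {ω : ℕ → X | pref ω s.length = s}

/-- `f` depends only on the first `n` states. -/
def NMeas (n : ℕ) (f : (ℕ → X) → EReal) : Prop :=
  ∀ ω₁ ω₂ : ℕ → X, pref ω₁ n = pref ω₂ n → f ω₁ = f ω₂

/-- `f` is bounded below (by a real constant). -/
def IsBddBelow (f : (ℕ → X) → EReal) : Prop := ∃ c : ℝ, ∀ ω, (c : EReal) ≤ f ω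

/-- `f` is bounded above (by a real constant). -/
def IsBddAbove (f : (ℕ → X) → EReal) : Prop := ∃ c : ℝ, ∀ ω, f ω ≤ (c : EReal)

/-- `f` is real-valued and bounded. -/
def IsGambleVal (f : (ℕ → X) → EReal) : Prop :=
  ∃ a b : ℝ, ∀ ω, (a : EReal) ≤ f ω ∧ f ω ≤ (b : EReal)

/-- `f` is an `n`-measurable gamble. -/
def IsNGamble (n : ℕ) (f : (ℕ → X) → EReal) : Prop := NMeas n f ∧ IsGambleVal f

/-- `f` is a finitary gamble. -/
def IsFinitaryGamble (f : (ℕ → X) → EReal) : Prop := (∃ n, NMeas n f) ∧ IsGambleVal f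

/-- `f` is finitary. -/
def IsFinitary (f : (ℕ → X) → EReal) : Prop := ∃ n, NMeas n f

/-- pointwise convergence of a sequence of global variables. -/
def PtwLim (fs : ℕ → (ℕ → X) → EReal) (f : (ℕ → X) → EReal) : Prop :=
  ∀ ω, Tendsto (fun n => fs n ω) atTop (nhds (f ω))

/-- the sequence is uniformly bounded below. -/
def UnifBddBelow (fs : ℕ → (ℕ → X) → EReal) : Prop :=
  ∃ c : ℝ, ∀ n ω, (c : EReal) ≤ fs n ω

/-- `f` belongs to `V̄_{b,lim}`: bounded below and a pointwise limit of finitary gambles. -/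
def Vblim (f : (ℕ → X) → EReal) : Prop :=
  IsBddBelow f ∧ ∃ fs : ℕ → (ℕ → X) → EReal,
    (∀ n, IsFinitaryGamble (fs n)) ∧ PtwLim fs f

/-- A coherent upper expectation on the finite state space `X`. -/
def IsCoherent [Fintype X] (Q : (X → ℝ) → ℝ) : Prop :=
  (∀ f : X → ℝ, Q f ≤ ⨆ x, f x) ∧
  (∀ f g : X → ℝ, Q (fun x => f x + g x) ≤ Q f + Q g) ∧
  (∀ l : ℝ, 0 ≤ l → ∀ f : X → ℝ, Q (fun x => l * f x) = l * Q f)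

/-- Axiom P1: compatibility with the local models. -/
def P1 (Q : List X → (X → ℝ) → ℝ) (E : ((ℕ → X) → EReal) → List X → EReal) : Prop :=
  ∀ (s : List X) (f : X → ℝ),
    E (fun ω => (f (ω s.length) : EReal)) s = ((Q s f : ℝ) : EReal)

/-- Axiom P2. -/
def P2 (E : ((ℕ → X) → EReal) → List X → EReal) : Prop :=
  ∀ f : (ℕ → X) → EReal, IsFinitaryGamble f → ∀ s : List X,
    E f s = E (fun ω => if ω ∈ cyl s then f ω else 0) s

/-- Axiom P3 (inequality form). -/
def P3le (E : ((ℕ → X) → EReal) → List X → EReal) : Prop :=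
  ∀ f : (ℕ → X) → EReal, IsFinitaryGamble f → ∀ (n : ℕ) (ω : ℕ → X),
    E f (pref ω n) ≤ E (fun ω' => E f (pref ω' (n + 1))) (pref ω n)

/-- Axiom P3 with equality: the law of iterated upper expectations. -/
def P3eq (E : ((ℕ → X) → EReal) → List X → EReal) : Prop :=
  ∀ f : (ℕ → X) → EReal, IsFinitaryGamble f → ∀ (n : ℕ) (ω : ℕ → X),
    E f (pref ω n) = E (fun ω' => E f (pref ω' (n + 1))) (pref ω n)

/-- Axiom P4: monotonicity. -/
def P4 (E : ((ℕ → X) → EReal) → List X → EReal) : Prop :=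
  ∀ f g : (ℕ → X) → EReal, (∀ ω, f ω ≤ g ω) → ∀ s : List X, E f s ≤ E g s

/-- Axiom P5. -/
def P5 (E : ((ℕ → X) → EReal) → List X → EReal) : Prop :=
  ∀ (s : List X) (f : (ℕ → X) → EReal) (fs : ℕ → (ℕ → X) → EReal),
    (∀ n, IsFinitaryGamble (fs n)) → UnifBddBelow fs → PtwLim fs f →
    E f s ≤ limsup (fun n => E (fs n) s) atTop

/-- Axiom P6. -/
def P6 (E : ((ℕ → X) → EReal) → List X → EReal) : Prop :=
  ∀ f : (ℕ → X) → EReal, Vblim f → ∀ s : List X,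
    ∃ fs : ℕ → (ℕ → X) → EReal,
      (∀ n, IsNGamble n (fs n)) ∧ UnifBddBelow fs ∧ PtwLim fs f ∧
      limsup (fun n => E (fs n) s) atTop ≤ E f s

/-- Axiom P7. -/
def P7 (E : ((ℕ → X) → EReal) → List X → EReal) : Prop :=
  ∀ (f : (ℕ → X) → EReal) (s : List X),
    E f s = sInf {y : EReal | ∃ g : (ℕ → X) → EReal,
      Vblim g ∧ (∀ ω, f ω ≤ g ω) ∧ y = E g s}

/-- bundled axioms P1–P5. -/
def P15 (Q : List X → (X → ℝ) → ℝ) (E : ((ℕ → X) → EReal) → List X → EReal) : Prop :=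
  P1 Q E ∧ P2 E ∧ P3le E ∧ P4 E ∧ P5 E

/-- `Qe` extends `Q` from gambles to extended-real variables. -/
def ExtendsLocal [Fintype X] (Q : (X → ℝ) → ℝ) (Qe : (X → EReal) → EReal) : Prop :=
  ∀ f : X → ℝ, Qe (fun x => (f x : EReal)) = ((Q f : ℝ) : EReal)

/-- continuity with respect to upper cuts. -/
def UpperCutCont (Qe : (X → EReal) → EReal) : Prop :=
  ∀ f : X → EReal, (∃ c : ℝ, ∀ x, (c : EReal) ≤ f x) →
    Tendsto (fun c : ℝ => Qe (fun x => min (f x) (c : EReal))) atTop (nhds (Qe f))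

/-- continuity with respect to lower cuts. -/
def LowerCutCont (Qe : (X → EReal) → EReal) : Prop :=
  ∀ f : X → EReal,
    Tendsto (fun c : ℝ => Qe (fun x => max (f x) (c : EReal))) atBot (nhds (Qe f))

/-- `Qe` is the extension of the imprecise probability tree `Q` satisfying
continuity with respect to upper and lower cuts. -/
def LocalExtension [Fintype X] (Q : List X → (X → ℝ) → ℝ)
    (Qe : List X → (X → EReal) → EReal) : Prop :=
  ∀ s : List X, ExtendsLocal (Q s) (Qe s) ∧ UpperCutCont (Qe s) ∧ LowerCutCont (Qe s)

/-- supermartingale with respect to the extended local models `Qe`. -/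
def IsSupermart (Qe : List X → (X → EReal) → EReal) (M : List X → EReal) : Prop :=
  ∀ s : List X, Qe s (fun x => M (s ++ [x])) ≤ M s

/-- a bounded-below process. -/
def MBddBelow (M : List X → EReal) : Prop := ∃ c : ℝ, ∀ s : List X, (c : EReal) ≤ M s

/-- the game-theoretic upper expectation (Shafer–Vovk). -/
noncomputable def EV (Qe : List X → (X → EReal) → EReal)
    (f : (ℕ → X) → EReal) (s : List X) : EReal :=
  sInf {y : EReal | ∃ M : List X → EReal, MBddBelow M ∧ IsSupermart Qe M ∧
    (∀ ω ∈ cyl s, f ω ≤ liminf (fun n => M (pref ω n)) atTop) ∧ y = M s}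

/-- a canonical path passing through the situation `s`. -/
noncomputable def extPath [Nonempty X] (s : List X) : ℕ → X :=
  fun i => if h : i < s.length then s.get ⟨i, h⟩ else Classical.arbitrary X

/-- extended-real addition with the convention `(+∞) + (−∞) = (−∞) + (+∞) = +∞`. -/
noncomputable def eadd (a b : EReal) : EReal := if a = ⊤ ∨ b = ⊤ then ⊤ else a + b

/-- extended-real finite sums with the conventions `0·(±∞) = 0` and
`(+∞) + (−∞) = +∞`. -/
noncomputable def esum {α : Type*} (s : Finset α) (f : α → EReal) : EReal :=
  if ∃ x ∈ s, f x = ⊤ then ⊤ else ∑ x ∈ s, f x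

/-- the σ-algebra `ℱ` on paths generated by all cylinder events. -/
def cylSA (X : Type*) : MeasurableSpace (ℕ → X) :=
  MeasurableSpace.generateFrom {A : Set (ℕ → X) | ∃ s : List X, A = cyl s}

/-- a precise probability tree: a probability mass function in every situation. -/
def IsTree [Fintype X] (p : List X → X → ℝ) : Prop :=
  ∀ s : List X, (∀ x, 0 ≤ p s x) ∧ ∑ x, p s x = 1

/-- the `i`-th entry (0-based) of a list, i.e. the `(i+1)`-th state. -/
noncomputable def nthL [Nonempty X] (z : List X) (i : ℕ) : X :=
  z.getD i (Classical.arbitrary X)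

/-- `P` is the family of conditional probability measures on `ℱ` determined by
the precise probability tree `p` via the product formula on cylinder events. -/
def CylProp [Fintype X] [Nonempty X] (p : List X → X → ℝ)
    (P : List X → @Measure (ℕ → X) (cylSA X)) : Prop :=
  ∀ s z : List X,
    P s (cyl z) =
      if s.length < z.length ∧ z.take s.length = s then
        ∏ i ∈ Finset.Ico s.length z.length, ENNReal.ofReal (p (z.take i) (nthL z i))
      else if z.length ≤ s.length ∧ s.take z.length = z then 1 else 0

/-- the nonnegative part of an extended real, as an `ℝ≥0∞`. -/
noncomputable def toENN (a : EReal) : ℝ≥0∞ := if a = ⊤ then ⊤ else ENNReal.ofReal a.toReal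

/-- `∫ f⁺ dP`. -/
noncomputable def lpos (P : @Measure (ℕ → X) (cylSA X)) (f : (ℕ → X) → EReal) : ℝ≥0∞ :=
  @MeasureTheory.lintegral _ (cylSA X) P (fun ω => toENN (f ω))

/-- `∫ f⁻ dP`. -/
noncomputable def lneg (P : @Measure (ℕ → X) (cylSA X)) (f : (ℕ → X) → EReal) : ℝ≥0∞ :=
  @MeasureTheory.lintegral _ (cylSA X) P (fun ω => toENN (-(f ω)))

/-- the Lebesgue integral `∫ f dP = ∫ f⁺ dP − ∫ f⁻ dP`. -/
noncomputable def emeas (P : @Measure (ℕ → X) (cylSA X)) (f : (ℕ → X) → EReal) : EReal :=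
  (lpos P f : EReal) - (lneg P f : EReal)

/-- `ℱ`-measurability of a global variable. -/
def FMeasurable (f : (ℕ → X) → EReal) : Prop := @Measurable _ _ (cylSA X) _ f

/-- the Lebesgue integral `∫ f dP` exists. -/
def EMeasExists (P : @Measure (ℕ → X) (cylSA X)) (f : (ℕ → X) → EReal) : Prop :=
  FMeasurable f ∧ min (lpos P f) (lneg P f) < ⊤

/-- the upper integral `Ē¹`. -/
noncomputable def upInt1 (P : @Measure (ℕ → X) (cylSA X)) (f : (ℕ → X) → EReal) : EReal :=
  sInf {y : EReal | ∃ g : (ℕ → X) → EReal,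
    FMeasurable g ∧ IsBddBelow g ∧ (∀ ω, f ω ≤ g ω) ∧ y = emeas P g}

/-- the upper integral `Ē²`. -/
noncomputable def upInt2 (P : @Measure (ℕ → X) (cylSA X)) (f : (ℕ → X) → EReal) : EReal :=
  sInf {y : EReal | ∃ g : (ℕ → X) → EReal,
    EMeasExists P g ∧ (∀ ω, f ω ≤ g ω) ∧ y = emeas P g}

/-- the game-theoretic upper expectation with respect to a precise probability tree. -/
noncomputable def EVp [Fintype X] (p : List X → X → ℝ)
    (f : (ℕ → X) → EReal) (s : List X) : EReal :=
  sInf {y : EReal | ∃ M : List X → EReal, MBddBelow M ∧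
    (∀ t : List X, ∑ x, ((p t x : ℝ) : EReal) * M (t ++ [x]) ≤ M t) ∧
    (∀ ω ∈ cyl s, f ω ≤ liminf (fun n => M (pref ω n)) atTop) ∧ y = M s}

/-- the credal set of a coherent upper expectation. -/
def credal [Fintype X] (Q : (X → ℝ) → ℝ) : Set (X → ℝ) :=
  {q | (∀ x, 0 ≤ q x) ∧ (∑ x, q x = 1) ∧ ∀ f : X → ℝ, ∑ x, f x * q x ≤ Q f}

/-- a precise probability tree compatible with the imprecise probability tree `Q`. -/
def Compat [Fintype X] (Q : List X → (X → ℝ) → ℝ) (p : List X → X → ℝ) : Prop :=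
  ∀ s : List X, p s ∈ credal (Q s)

/-- the global measure-theoretic upper expectation. -/
noncomputable def Emeas [Fintype X] (Q : List X → (X → ℝ) → ℝ)
    (P : (List X → X → ℝ) → List X → @Measure (ℕ → X) (cylSA X))
    (f : (ℕ → X) → EReal) (s : List X) : EReal :=
  sSup {y : EReal | ∃ p : List X → X → ℝ, Compat Q p ∧ y = upInt1 (P p s) f}

lemma pref_length (ω : ℕ → X) (n : ℕ) : (pref ω n).length = n := List.length_ofFn

lemma pref_succ (ω : ℕ → X) (n : ℕ) : pref ω (n + 1) = pref ω n ++ [ω n] :=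
  List.ofFn_succ_last

lemma pref_take (ω : ℕ → X) {m n : ℕ} (hm : m ≤ n) : (pref ω n).take m = pref ω m := by
  apply List.ext_getElem
  · simp [pref_length, hm]
  · intro i _ _
    simp only [List.getElem_take, pref, List.getElem_ofFn]

lemma pref_eq_pref_of_le {ω ω' : ℕ → X} {m n : ℕ} (h : pref ω n = pref ω' n) (hm : m ≤ n) :
    pref ω m = pref ω' m := by
  rw [← pref_take ω hm, h, pref_take ω' hm]

lemma mem_cyl_pref_iff {ω ω' : ℕ → X} {k : ℕ} :
    ω' ∈ cyl (pref ω k) ↔ pref ω' k = pref ω k := by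
  show pref ω' (pref ω k).length = pref ω k ↔ _
  rw [pref_length]

lemma mem_cyl_of_prefix {ω : ℕ → X} {u : List X} {n : ℕ} (h : u <+: pref ω n) :
    ω ∈ cyl u := by
  have hlen : u.length ≤ n := pref_length ω n ▸ h.length_le
  show pref ω u.length = u
  conv_rhs => rw [List.prefix_iff_eq_take.1 h]
  exact (pref_take ω hlen).symm

lemma isClopen_setOf_pref [TopologicalSpace X] [DiscreteTopology X] [Finite X] (k : ℕ)
    (P : List X → Prop) : IsClopen {ω : ℕ → X | P (pref ω k)} :=
  (isClopen_discrete {v : Fin k → X | P (List.ofFn v)}).preimage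
    (continuous_pi fun _ => continuous_apply _)

theorem exists_horizon [Finite X] {s : List X} {R : ℕ → List X → Prop}
    (hR : ∀ u, Monotone (R · u)) (h : ∀ ω ∈ cyl s, ∃ n k, R n (pref ω k)) :
    ∃ J, ∀ ω ∈ cyl s, ∃ k ≤ J, R J (pref ω k) := by
  let _ : TopologicalSpace X := ⊥
  have _ : DiscreteTopology X := ⟨rfl⟩
  let U : ℕ → Set (ℕ → X) := fun J => {ω | ∃ k ≤ J, R J (pref ω k)}
  have hU_open : ∀ J, IsOpen (U J) := fun J => by
    have : U J = {ω | ∃ k ≤ J, R J ((pref ω J).take k)} := by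
      ext ω
      refine exists_congr fun k => and_congr_right fun hk => ?_
      rw [pref_take ω hk]
    exact this ▸ (isClopen_setOf_pref J fun t => ∃ k ≤ J, R J (t.take k)).isOpen
  have hU_mono : Monotone U := fun J J' hJ ω ⟨k, hk, hR'⟩ =>
    ⟨k, hk.trans hJ, hR _ hJ hR'⟩
  have hcover : cyl s ⊆ ⋃ J, U J := fun ω hω => by
    obtain ⟨n, k, hnk⟩ := h ω hω
    exact Set.mem_iUnion.2 ⟨max n k, k, le_max_right n k, hR _ (le_max_left n k) hnk⟩
  have hcompact : IsCompact (cyl s) :=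
    (isClopen_setOf_pref s.length (· = s)).isClosed.isCompact
  exact hcompact.elim_directed_cover U hU_open hcover hU_mono.directed_le

lemma _root_.EReal.le_of_forall_pos_le_add_coe {a b : EReal} (hb : b ≠ ⊥)
    (h : ∀ ε : ℝ, 0 < ε → a ≤ b + ε) : a ≤ b := by
  induction b using EReal.rec with
  | bot => exact absurd rfl hb
  | top => exact le_top
  | coe r =>
    refine EReal.le_of_forall_lt_iff_le.1 fun z hz => ?_
    have := h (z - r) (sub_pos.2 (EReal.coe_lt_coe_iff.1 hz))
    rwa [← EReal.coe_add, add_sub_cancel] at this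

lemma _root_.EReal.coe_min_le_min {c B : ℝ} {e : EReal} (h : (c : EReal) ≤ e) :
    ((min c B : ℝ) : EReal) ≤ min e B :=
  le_min ((EReal.coe_le_coe_iff.2 (min_le_left c B)).trans h)
    (EReal.coe_le_coe_iff.2 (min_le_right c B))

lemma exists_le_add_of_le_liminf {v : ℕ → EReal} {u : ℕ → ℝ} {l : EReal} {a b : ℝ}
    (hv : Tendsto v atTop (nhds l)) (hl : l ≤ liminf (fun k => (u k : EReal)) atTop)
    (ha : ∀ k, a ≤ u k) (hb : ∀ k, u k ≤ b) {ε : ℝ} (hε : 0 < ε) :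
    ∃ n, ∀ᶠ k in atTop, v n ≤ ((u k + ε : ℝ) : EReal) := by
  set α := liminf (fun k => (u k : EReal)) atTop
  have hα_top : α ≠ ⊤ := ne_top_of_le_ne_top (EReal.coe_ne_top b) <|
    liminf_le_of_le (by isBoundedDefault) fun c hc => by
      obtain ⟨k, hk⟩ := hc.exists
      exact hk.trans (EReal.coe_le_coe_iff.2 (hb k))
  have hα_bot : α ≠ ⊥ := ne_bot_of_le_ne_bot (EReal.coe_ne_bot a) <|
    le_liminf_of_le (by isBoundedDefault)
      (Eventually.of_forall fun k => EReal.coe_le_coe_iff.2 (ha k))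
  obtain ⟨r, hr⟩ : ∃ r : ℝ, α = r := ⟨α.toReal, (EReal.coe_toReal hα_top hα_bot).symm⟩
  have hl_lt : l < ((r + ε / 2 : ℝ) : EReal) :=
    hl.trans_lt (hr ▸ EReal.coe_lt_coe_iff.2 (by linarith))
  obtain ⟨n, hn⟩ := (hv.eventually_lt_const hl_lt).exists
  have hα_gt : ((r - ε / 2 : ℝ) : EReal) < α := hr ▸ EReal.coe_lt_coe_iff.2 (by linarith)
  refine ⟨n, ?_⟩
  filter_upwards [eventually_lt_of_lt_liminf hα_gt] with k hk
  exact hn.le.trans (EReal.coe_le_coe_iff.2 (by linarith [EReal.coe_lt_coe_iff.1 hk]))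

lemma exists_forall_cyl_le_add {g : ℕ → (ℕ → X) → EReal} {gl : (ℕ → X) → EReal}
    (hfin : ∀ n, IsFinitary (g n)) (hlim : PtwLim g gl) {m : List X → ℝ} {a b : ℝ}
    (ha : ∀ t, a ≤ m t) (hb : ∀ t, m t ≤ b) {ω : ℕ → X}
    (hdom : gl ω ≤ liminf (fun k => (m (pref ω k) : EReal)) atTop) {ε : ℝ} (hε : 0 < ε)
    (k₀ : ℕ) :
    ∃ n k, k₀ ≤ k ∧ ∀ ω' ∈ cyl (pref ω k), g n ω' ≤ ((m (pref ω k) + ε : ℝ) : EReal) := by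
  obtain ⟨n, hn⟩ :=
    exists_le_add_of_le_liminf (hlim ω) hdom (fun _ => ha _) (fun _ => hb _) hε
  obtain ⟨d, hd⟩ := hfin n
  obtain ⟨k, hk, hle⟩ := (hn.and (eventually_ge_atTop (max d k₀))).exists
  refine ⟨n, k, (le_max_right _ _).trans hle, fun ω' hω' => ?_⟩
  rw [hd ω' ω (pref_eq_pref_of_le (mem_cyl_pref_iff.1 hω') ((le_max_left _ _).trans hle))]
  exact hk

section Stopping

variable (S : List X → Prop)

/-- `inits` lists the prefixes by increasing length, so this is the shortest prefix in `S`. -/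
noncomputable def firstHit (t : List X) : Option (List X) :=
  t.inits.find? fun u => decide (S u)

noncomputable def stopPrefix (t : List X) : List X := (firstHit S t).getD t

variable {S}

lemma firstHit_append_singleton (t : List X) (x : X) :
    firstHit S (t ++ [x]) =
      (firstHit S t).or (if S (t ++ [x]) then some (t ++ [x]) else none) := by
  simp [firstHit, List.inits_append, List.find?_append, List.find?_singleton]

lemma firstHit_spec {t u : List X} (h : firstHit S t = some u) : S u ∧ u <+: t := by
  unfold firstHit at h
  exact ⟨by simpa using List.find?_some h,
    (List.mem_inits _ _).1 (List.mem_of_find?_eq_some h)⟩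

lemma exists_firstHit_eq_some {t : List X} (h : S t) : ∃ u, firstHit S t = some u := by
  refine Option.ne_none_iff_exists'.1 fun hnone => ?_
  exact List.find?_eq_none.1 hnone t ((List.mem_inits _ _).2 (List.prefix_refl t))
    (decide_eq_true h)

lemma firstHit_pref_of_le {ω : ℕ → X} {k m : ℕ} {u : List X}
    (h : firstHit S (pref ω k) = some u) (hkm : k ≤ m) : firstHit S (pref ω m) = some u := by
  induction m, hkm using Nat.le_induction with
  | base => exact h
  | succ m _ ih => rw [pref_succ, firstHit_append_singleton, ih, Option.some_or]

lemma stopPrefix_append_of_some {t u : List X} (h : firstHit S t = some u) (x : X) :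
    stopPrefix S (t ++ [x]) = stopPrefix S t := by
  simp [stopPrefix, firstHit_append_singleton, h]

lemma stopPrefix_append_of_none {t : List X} (h : firstHit S t = none) (x : X) :
    stopPrefix S (t ++ [x]) = t ++ [x] := by
  by_cases hS : S (t ++ [x]) <;> simp [stopPrefix, firstHit_append_singleton, h, hS]

lemma stopPrefix_of_none {t : List X} (h : firstHit S t = none) : stopPrefix S t = t := by
  simp [stopPrefix, h]

lemma stopPrefix_eq_self {t : List X} (h : ∀ u, S u → u <+: t → u = t) :
    stopPrefix S t = t := by
  rcases hfirst : firstHit S t with _ | u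
  · exact stopPrefix_of_none hfirst
  · obtain ⟨hu, hut⟩ := firstHit_spec hfirst
    simp [stopPrefix, hfirst, h u hu hut]

lemma le_liminf_stopPrefix {F : List X → EReal} {h : (ℕ → X) → EReal}
    (hF : ∀ u, S u → ∀ ω ∈ cyl u, h ω ≤ F u) {ω : ℕ → X} {k : ℕ} (hk : S (pref ω k)) :
    h ω ≤ liminf (fun n => F (stopPrefix S (pref ω n))) atTop := by
  obtain ⟨u, hu⟩ := exists_firstHit_eq_some hk
  obtain ⟨hSu, hprefix⟩ := firstHit_spec hu
  refine le_liminf_of_le (by isBoundedDefault) ?_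
  filter_upwards [eventually_ge_atTop k] with n hn
  rw [stopPrefix, firstHit_pref_of_le hu hn, Option.getD_some]
  exact hF u hSu ω (mem_cyl_of_prefix hprefix)

end Stopping

namespace IsCoherent

variable [Fintype X] [Nonempty X] {Q : (X → ℝ) → ℝ}

lemma const_le (hQ : IsCoherent Q) (r : ℝ) : Q (fun _ => r) ≤ r := by
  simpa using hQ.1 fun _ => r

lemma mono (hQ : IsCoherent Q) {f g : X → ℝ} (h : ∀ x, f x ≤ g x) : Q f ≤ Q g := by
  have hsub : Q (fun x => g x + (f x - g x)) ≤ Q g + Q (fun x => f x - g x) := hQ.2.1 _ _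
  have hdiff : Q (fun x => f x - g x) ≤ 0 :=
    (hQ.1 _).trans (ciSup_le fun x => sub_nonpos.2 (h x))
  simp only [add_sub_cancel] at hsub
  linarith

lemma add_const_le (hQ : IsCoherent Q) (f : X → ℝ) (r : ℝ) :
    Q (fun x => f x + r) ≤ Q f + r :=
  (hQ.2.1 f fun _ => r).trans (by linarith [hQ.const_le r])

end IsCoherent

section LocalModels

variable [Fintype X] [Nonempty X] {Q : (X → ℝ) → ℝ} {Qe : (X → EReal) → EReal}

lemma ExtendsLocal.mono (hext : ExtendsLocal Q Qe) (hQ : IsCoherent Q) {h₁ h₂ : X → EReal}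
    (hle : ∀ x, h₁ x ≤ h₂ x) (hbot : ∀ x, h₁ x ≠ ⊥) (htop : ∀ x, h₂ x ≠ ⊤) :
    Qe h₁ ≤ Qe h₂ := by
  have hreal : ∀ h : X → EReal, (∀ x, h x ≠ ⊤) → (∀ x, h x ≠ ⊥) →
      Qe h = Q (fun x => (h x).toReal) := fun h ht hb => by
    conv_lhs => rw [show h = fun x => ((h x).toReal : EReal) from
      funext fun x => (EReal.coe_toReal (ht x) (hb x)).symm]
    exact hext _
  rw [hreal h₁ (fun x => ne_top_of_le_ne_top (htop x) (hle x)) hbot,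
    hreal h₂ htop (fun x => ne_bot_of_le_ne_bot (hbot x) (hle x)), EReal.coe_le_coe_iff]
  exact hQ.mono fun x => EReal.toReal_le_toReal (hle x) (hbot x) (htop x)

lemma UpperCutCont.apply_min_le (hup : UpperCutCont Qe) (hext : ExtendsLocal Q Qe)
    (hQ : IsCoherent Q) {h : X → EReal} {c : ℝ} (hc : ∀ x, (c : EReal) ≤ h x) (B : ℝ) :
    Qe (fun x => min (h x) B) ≤ Qe h := by
  refine ge_of_tendsto (hup h ⟨c, hc⟩) ?_
  filter_upwards [eventually_ge_atTop B] with d hd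
  exact hext.mono hQ (fun x => min_le_min_left _ (EReal.coe_le_coe_iff.2 hd))
    (fun x => ne_bot_of_le_ne_bot (EReal.coe_ne_bot _) (EReal.coe_min_le_min (hc x)))
    (fun x => ne_top_of_le_ne_top (EReal.coe_ne_top d) (min_le_right _ _))

end LocalModels

section EV

variable {Qe : List X → (X → EReal) → EReal}

lemma EV_le_of_isSupermart {f : (ℕ → X) → EReal} {s : List X} {M : List X → EReal}
    (hMb : MBddBelow M) (hM : IsSupermart Qe M)
    (hdom : ∀ ω ∈ cyl s, f ω ≤ liminf (fun n => M (pref ω n)) atTop) :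
    EV Qe f s ≤ M s :=
  sInf_le ⟨M, hMb, hM, hdom, rfl⟩

lemma EV_mono {f g : (ℕ → X) → EReal} (h : ∀ ω, f ω ≤ g ω) (s : List X) :
    EV Qe f s ≤ EV Qe g s := by
  refine sInf_le_sInf ?_
  rintro _ ⟨M, hMb, hM, hdom, rfl⟩
  exact ⟨M, hMb, hM, fun ω hω => (h ω).trans (hdom ω hω), rfl⟩

end EV

section Supermartingales

variable [Fintype X] {Q : List X → (X → ℝ) → ℝ} {Qe : List X → (X → EReal) → EReal}

variable (Q) in
def IsRealSupermart (m : List X → ℝ) : Prop := ∀ t, Q t (fun x => m (t ++ [x])) ≤ m t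

lemma isSupermart_coe_iff (hext : ∀ t, ExtendsLocal (Q t) (Qe t)) {m : List X → ℝ} :
    IsSupermart Qe (fun t => (m t : EReal)) ↔ IsRealSupermart Q m :=
  forall_congr' fun t => by
    rw [show Qe t (fun x => (m (t ++ [x]) : EReal)) = Q t (fun x => m (t ++ [x])) from
      hext t _, EReal.coe_le_coe_iff]

variable [Nonempty X]

lemma IsSupermart.min_const (hQ : ∀ s, IsCoherent (Q s)) (hQe : LocalExtension Q Qe)
    {M : List X → EReal} (hM : IsSupermart Qe M) (hMb : MBddBelow M) (B : ℝ) :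
    IsSupermart Qe (fun t => min (M t) B) := by
  obtain ⟨c, hc⟩ := hMb
  intro t
  obtain ⟨hext, hup, -⟩ := hQe t
  refine le_min ((hup.apply_min_le hext (hQ t) (fun x => hc _) B).trans (hM t)) ?_
  calc Qe t (fun x => min (M (t ++ [x])) B) ≤ Qe t (fun _ => ((B : ℝ) : EReal)) :=
        hext.mono (hQ t) (fun x => min_le_right _ _)
          (fun x => ne_bot_of_le_ne_bot (EReal.coe_ne_bot _) (EReal.coe_min_le_min (hc _)))
          (fun _ => EReal.coe_ne_top B)
    _ = Q t (fun _ => B) := hext fun _ => B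
    _ ≤ B := EReal.coe_le_coe_iff.2 ((hQ t).const_le B)

lemma IsRealSupermart.add_const (hQ : ∀ s, IsCoherent (Q s)) {m : List X → ℝ}
    (hm : IsRealSupermart Q m) (ε : ℝ) : IsRealSupermart Q (fun t => m t + ε) := fun t =>
  ((hQ t).add_const_le _ ε).trans (by linarith [hm t])

lemma IsRealSupermart.stopped (hQ : ∀ s, IsCoherent (Q s)) {m : List X → ℝ}
    (hm : IsRealSupermart Q m) (S : List X → Prop) :
    IsRealSupermart Q (fun t => m (stopPrefix S t)) := by
  intro t
  rcases hfirst : firstHit S t with _ | u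
  · simp only [stopPrefix_append_of_none hfirst, stopPrefix_of_none hfirst]
    exact hm t
  · simp only [stopPrefix_append_of_some hfirst]
    exact (hQ t).const_le _

lemma exists_EV_le_add (hQ : ∀ s, IsCoherent (Q s)) (hext : ∀ s, ExtendsLocal (Q s) (Qe s))
    {m : List X → ℝ} (hm : IsRealSupermart Q m) {a b : ℝ} (ha : ∀ t, a ≤ m t)
    (hb : ∀ t, m t ≤ b) {g : ℕ → (ℕ → X) → EReal} {gl : (ℕ → X) → EReal}
    (hfin : ∀ n, IsFinitary (g n)) (hanti : ∀ ω, Antitone (g · ω)) (hlim : PtwLim g gl)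
    {s : List X} (hdom : ∀ ω ∈ cyl s, gl ω ≤ liminf (fun k => (m (pref ω k) : EReal)) atTop)
    {ε : ℝ} (hε : 0 < ε) : ∃ J, EV Qe (g J) s ≤ ((m s + ε : ℝ) : EReal) := by
  let R : ℕ → List X → Prop := fun n u =>
    s.length ≤ u.length ∧ ∀ ω ∈ cyl u, g n ω ≤ ((m u + ε : ℝ) : EReal)
  have hR : ∀ u, Monotone (R · u) := fun u n n' hnn' hRn =>
    ⟨hRn.1, fun ω hω => (hanti ω hnn').trans (hRn.2 ω hω)⟩
  obtain ⟨J, hJ⟩ := exists_horizon hR fun ω hω => by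
    obtain ⟨n, k, hk, hle⟩ :=
      exists_forall_cyl_le_add hfin hlim ha hb (hdom ω hω) hε s.length
    exact ⟨n, k, (pref_length ω k).symm ▸ hk, hle⟩
  -- the witness: `m + ε`, stopped once `g J` lies below it on a whole cylinder
  let N : List X → ℝ := fun t => m (stopPrefix (R J) t) + ε
  have hN : IsSupermart Qe (fun t => (N t : EReal)) :=
    (isSupermart_coe_iff hext).2 ((hm.stopped hQ (R J)).add_const hQ ε)
  have hN_bdd : MBddBelow (fun t => (N t : EReal)) :=
    ⟨a + ε, fun t => EReal.coe_le_coe_iff.2 (by linarith [ha (stopPrefix (R J) t)])⟩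
  have hN_s : stopPrefix (R J) s = s :=
    stopPrefix_eq_self fun u hu hus => hus.eq_of_length_le hu.1
  refine ⟨J, (EV_le_of_isSupermart hN_bdd hN fun ω hω => ?_).trans_eq (by simp only [N, hN_s])⟩
  obtain ⟨k, -, hk⟩ := hJ ω hω
  exact le_liminf_stopPrefix (F := fun u => ((m u + ε : ℝ) : EReal)) (fun u hu => hu.2) hk

theorem iInf_EV_le (hQ : ∀ s, IsCoherent (Q s)) (hQe : LocalExtension Q Qe)
    {g : ℕ → (ℕ → X) → EReal} {gl : (ℕ → X) → EReal} (hfin : ∀ n, IsFinitary (g n))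
    (hanti : ∀ ω, Antitone (g · ω)) (hlim : PtwLim g gl) {B : ℝ} (hB : ∀ ω, gl ω ≤ B)
    (s : List X) : ⨅ n, EV Qe (g n) s ≤ EV Qe gl s := by
  refine le_sInf ?_
  rintro _ ⟨M, ⟨c, hc⟩, hM, hdom, rfl⟩
  have hc' : ∀ t, ((min c B : ℝ) : EReal) ≤ min (M t) B :=
    fun t => EReal.coe_min_le_min (hc t)
  let m : List X → ℝ := fun t => (min (M t) B).toReal
  have hm_coe : ∀ t, (m t : EReal) = min (M t) B := fun t =>
    EReal.coe_toReal (ne_top_of_le_ne_top (EReal.coe_ne_top B) (min_le_right _ _))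
      (ne_bot_of_le_ne_bot (EReal.coe_ne_bot _) (hc' t))
  have hm : IsRealSupermart Q m := (isSupermart_coe_iff fun t => (hQe t).1).1 <| by
    simpa only [hm_coe] using hM.min_const hQ hQe ⟨c, hc⟩ B
  have hdom' : ∀ ω ∈ cyl s, gl ω ≤ liminf (fun k => (m (pref ω k) : EReal)) atTop := by
    intro ω hω
    have hmin := (monotone_id.min monotone_const).map_liminf_of_continuousAt
      (fun k => M (pref ω k)) (continuous_id.min continuous_const).continuousAt
      (f := fun e : EReal => min e B) (F := atTop)
    simp only [hm_coe]
    exact hmin ▸ le_min (hdom ω hω) (hB ω)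
  refine EReal.le_of_forall_pos_le_add_coe (ne_bot_of_le_ne_bot (EReal.coe_ne_bot c) (hc s))
    fun ε hε => ?_
  obtain ⟨J, hJ⟩ := exists_EV_le_add hQ (fun t => (hQe t).1) hm
    (fun t => EReal.coe_le_coe_iff.1 (hm_coe t ▸ hc' t))
    (fun t => EReal.coe_le_coe_iff.1 (hm_coe t ▸ min_le_right _ _)) hfin hanti hlim hdom' hε
  calc ⨅ n, EV Qe (g n) s ≤ EV Qe (g J) s := iInf_le _ J
    _ ≤ ((m s + ε : ℝ) : EReal) := hJ
    _ ≤ M s + ε := by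
      rw [EReal.coe_add, hm_coe]
      exact add_le_add_left (min_le_left _ _) _

end Supermartingales

theorem stmt9 {X : Type*} [Fintype X] [Nonempty X]
    (Q : List X → (X → ℝ) → ℝ) (hQ : ∀ s, IsCoherent (Q s))
    (Qe : List X → (X → EReal) → EReal) (hQe : LocalExtension Q Qe)
    (s : List X) (fs : ℕ → (ℕ → X) → EReal) (f : (ℕ → X) → EReal)
    (hfin : ∀ n, IsFinitary (fs n)) (hab : ∀ n, IsBddAbove (fs n))
    (hmono : ∀ (n : ℕ) (ω : ℕ → X), fs (n + 1) ω ≤ fs n ω) (hlim : PtwLim fs f) :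
    Tendsto (fun n => EV Qe (fs n) s) atTop (nhds (EV Qe f s)) := by
  have hanti : ∀ ω, Antitone (fs · ω) := fun ω => antitone_nat_of_succ_le fun n => hmono n ω
  have hf_le : ∀ n ω, f ω ≤ fs n ω := fun n ω => (hanti ω).le_of_tendsto (hlim ω) n
  obtain ⟨B, hB⟩ := hab 0
  have hEV : EV Qe f s = ⨅ n, EV Qe (fs n) s :=
    le_antisymm (le_iInf fun n => EV_mono (hf_le n) s)
      (iInf_EV_le hQ hQe hfin hanti hlim (fun ω => (hf_le 0 ω).trans (hB ω)) s)
  rw [hEV]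
  exact tendsto_atTop_iInf (antitone_nat_of_succ_le fun n => EV_mono (hmono n) s)

end UEP
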